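/- arXiv:1902.06046 — 7 statements merged into one kernel-verified Lean document; each statement's English description precedes it below -/
import Mathlib

section
/- Let X be a compact Hausdorff space, G a group acting on X by homeomorphisms, and let a, b, c be finite tuples of nonnegative continuous functions on X. If a ≼ b and b ≼ c (where ≼ is the dynamical subequivalence: for each function in the first tuple and each closed subset of its open support, there exist a finite open cover of the closed set, group elements, and target indices such that the translated open sets, tagged with target indices, are pairwise disjoint and contained in the disjoint union of supports of the second tuple), then a ≼ c. -/
open scoped Pointwise NNReal ENNReal

variable {X : Type*} [TopologicalSpace X] {G : Type*} [Group G] [MulAction G X]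

/-- The open support of a continuous `ℝ≥0`-valued function. -/
def osupp (f : C(X, ℝ≥0)) : Set X := {x | f x ≠ 0}

/-- Dynamical subequivalence `A ≼ B` for two finite tuples (lists) of subsets of `X`. -/
def SetSubeq (G : Type*) [Group G] [MulAction G X] (A B : List (Set X)) : Prop :=
  ∀ F : Fin A.length → Set X,
    (∀ i, IsClosed (F i) ∧ F i ⊆ A.get i) →
    ∃ (J : Fin A.length → ℕ)
      (U : (i : Fin A.length) → Fin (J i) → Set X)
      (s : (i : Fin A.length) → Fin (J i) → G)
      (k : (i : Fin A.length) → Fin (J i) → Fin B.length),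
      (∀ i j, IsOpen (U i j)) ∧
      (∀ i, F i ⊆ ⋃ j, U i j) ∧
      (∀ i j, (s i j) • U i j ⊆ B.get (k i j)) ∧
      (∀ (p q : Σ i : Fin A.length, Fin (J i)), p ≠ q → k p.1 p.2 = k q.1 q.2 →
        Disjoint ((s p.1 p.2) • U p.1 p.2) ((s q.1 q.2) • U q.1 q.2))

/-- Dynamical subequivalence `a ≼ b` for tuples of nonnegative continuous functions. -/
def DynSubeq (G : Type*) [Group G] [MulAction G X] (a b : List C(X, ℝ≥0)) : Prop :=
  SetSubeq G (a.map osupp) (b.map osupp)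

/-- The entrywise cut-down `(f - ε)₊`. -/
noncomputable def cutFun (f : C(X, ℝ≥0)) (ε : ℝ≥0) : C(X, ℝ≥0) :=
  ⟨fun x => f x - ε, f.continuous.sub continuous_const⟩

noncomputable def cutList (a : List C(X, ℝ≥0)) (ε : ℝ≥0) : List C(X, ℝ≥0) := a.map (cutFun · ε)

/-- Membership in the algebra of sets generated by the open sets of `X`. -/
def InAlg (X : Type*) [TopologicalSpace X] (s : Set X) : Prop :=
  s ∈ MeasureTheory.generateSetAlgebra {t : Set X | IsOpen t}

/-- A `G`-invariant regular premeasure on the algebra generated by the open sets. -/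
structure InvRegPremeasure (X : Type*) [TopologicalSpace X] (G : Type*) [Group G]
    [MulAction G X] where
  m : Set X → ℝ≥0∞
  junk : ∀ s : Set X, ¬ InAlg X s → m s = 0
  empty' : m ∅ = 0
  countably_additive : ∀ A : ℕ → Set X, (∀ n, InAlg X (A n)) →
    Pairwise (Function.onFun Disjoint A) → InAlg X (⋃ n, A n) →
    m (⋃ n, A n) = ∑' n, m (A n)
  invariant : ∀ (g : G) (s : Set X), InAlg X s → m (g • s) = m s
  inner_regular : ∀ s : Set X, InAlg X s →
    m s = ⨆ (F : Set X) (_ : IsCompact F ∧ F ⊆ s), m F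
  outer_regular : ∀ s : Set X, InAlg X s →
    m s = ⨅ (O : Set X) (_ : IsOpen O ∧ s ⊆ O), m O

/-- A state on the generalized type semigroup `W(X, G)`, described at the level of
`K(X, G)`: a function on tuples which is monotone for `≼`, additive for concatenation,
and vanishes on the empty tuple. -/
structure DynState (X : Type*) [TopologicalSpace X] (G : Type*) [Group G]
    [MulAction G X] where
  toFun : List C(X, ℝ≥0) → ℝ≥0∞
  mono : ∀ a b, DynSubeq G a b → toFun a ≤ toFun b
  additive : ∀ a b, toFun (a ++ b) = toFun a + toFun b
  zero' : toFun [] = 0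

/-- Lower semicontinuity of a state. -/
def DynState.LSC (D : DynState X G) : Prop :=
  ∀ a, D.toFun a = ⨆ (ε : ℝ≥0) (_ : 0 < ε), D.toFun (cutList a ε)

theorem setSubeq_trans' {X : Type*} [TopologicalSpace X] [CompactSpace X] [T2Space X]
    {G : Type*} [Group G] [MulAction G X]
    (hG : ∀ g : G, Continuous fun x : X => g • x)
    (A B C : List (Set X)) (hab : SetSubeq G A B) (hbc : SetSubeq G B C) :
    SetSubeq G A C := by
  intro F hF
  obtain ⟨J, U, s, k, hUo, hFU, hsub, hdisj⟩ := hab F hF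
  -- shrink the covers
  have hshrink : ∀ i : Fin A.length, ∃ v : Fin (J i) → Set X,
      F i ⊆ ⋃ j, v j ∧ (∀ j, IsOpen (v j)) ∧ ∀ j, closure (v j) ⊆ U i j := by
    intro i
    exact exists_subset_iUnion_closure_subset (hF i).1 (hUo i)
      (fun x _ => Set.toFinite _) (hFU i)
  choose v hFv hvo hvU using hshrink
  -- closed subsets of B
  set F' : Fin B.length → Set X := fun l =>
    ⋃ (p : Σ i : Fin A.length, Fin (J i)) (_ : k p.1 p.2 = l),
      s p.1 p.2 • closure (v p.1 p.2) with hF'def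
  have hsmul_closed : ∀ (g : G) (t : Set X), IsClosed t → IsClosed (g • t) := by
    intro g t ht
    rw [← Set.image_smul]
    exact ((ht.isCompact).image (hG g)).isClosed
  have hF'cl : ∀ l, IsClosed (F' l) ∧ F' l ⊆ B.get l := by
    intro l
    constructor
    · apply isClosed_iUnion_of_finite
      intro p
      apply isClosed_iUnion_of_finite
      intro _
      exact hsmul_closed _ _ isClosed_closure
    · apply Set.iUnion_subset; intro p; apply Set.iUnion_subset; intro hp
      calc s p.1 p.2 • closure (v p.1 p.2) ⊆ s p.1 p.2 • U p.1 p.2 :=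
            Set.smul_set_mono (hvU p.1 p.2)
        _ ⊆ B.get (k p.1 p.2) := hsub p.1 p.2
        _ = B.get l := by rw [hp]
  obtain ⟨M, V, t, κ, hVo, hF'V, hsub', hdisj'⟩ := hbc F' hF'cl
  -- build the new data
  refine ⟨fun i => Fintype.card (Σ j : Fin (J i), Fin (M (k i j))),
    fun i n => U i ((Fintype.equivFin _).symm n).1 ∩
      (s i ((Fintype.equivFin _).symm n).1)⁻¹ •
        V (k i ((Fintype.equivFin _).symm n).1) ((Fintype.equivFin _).symm n).2,
    fun i n => t (k i ((Fintype.equivFin _).symm n).1) ((Fintype.equivFin _).symm n).2 *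
      s i ((Fintype.equivFin _).symm n).1,
    fun i n => κ (k i ((Fintype.equivFin _).symm n).1) ((Fintype.equivFin _).symm n).2,
    ?_, ?_, ?_, ?_⟩
  · intro i n
    refine (hUo i _).inter ?_
    have : (s i ((Fintype.equivFin _).symm n).1)⁻¹ •
        V (k i ((Fintype.equivFin _).symm n).1) ((Fintype.equivFin _).symm n).2
        = (fun x : X => s i ((Fintype.equivFin _).symm n).1 • x) ⁻¹'
          V (k i ((Fintype.equivFin _).symm n).1) ((Fintype.equivFin _).symm n).2 := by
      ext x; simp [Set.mem_inv_smul_set_iff]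
    rw [this]
    exact (hVo _ _).preimage (hG _)
  · intro i x hx
    obtain ⟨j, hj⟩ := Set.mem_iUnion.mp (hFv i hx)
    have hxU : x ∈ U i j := hvU i j (subset_closure hj)
    have hsx : s i j • x ∈ F' (k i j) := by
      refine Set.mem_iUnion.mpr ⟨⟨i, j⟩, Set.mem_iUnion.mpr ⟨rfl, ?_⟩⟩
      exact Set.smul_mem_smul_set (subset_closure hj)
    obtain ⟨m, hm⟩ := Set.mem_iUnion.mp (hF'V (k i j) hsx)
    have hgoal : ∀ P : Σ j' : Fin (J i), Fin (M (k i j')), P = ⟨j, m⟩ →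
        x ∈ U i P.1 ∩ (s i P.1)⁻¹ • V (k i P.1) P.2 := by
      rintro P rfl
      exact ⟨hxU, Set.mem_inv_smul_set_iff.mpr hm⟩
    exact Set.mem_iUnion.mpr ⟨Fintype.equivFin _ ⟨j, m⟩,
      hgoal _ (Equiv.symm_apply_apply _ _)⟩
  · intro i n
    set p := (Fintype.equivFin (Σ j : Fin (J i), Fin (M (k i j)))).symm n with hp
    calc (t (k i p.1) p.2 * s i p.1) • (U i p.1 ∩ (s i p.1)⁻¹ • V (k i p.1) p.2)
        ⊆ (t (k i p.1) p.2 * s i p.1) • ((s i p.1)⁻¹ • V (k i p.1) p.2) :=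
          Set.smul_set_mono Set.inter_subset_right
      _ = t (k i p.1) p.2 • V (k i p.1) p.2 := by
          rw [smul_smul, mul_assoc, mul_inv_cancel, mul_one]
      _ ⊆ C.get (κ (k i p.1) p.2) := hsub' _ _
  · rintro ⟨i1, n1⟩ ⟨i2, n2⟩ hpq hk
    simp only at hk ⊢
    set P := (Fintype.equivFin (Σ j : Fin (J i1), Fin (M (k i1 j)))).symm n1 with hP
    set Q := (Fintype.equivFin (Σ j : Fin (J i2), Fin (M (k i2 j)))).symm n2 with hQ
    have key : ∀ (i : Fin A.length) (j : Fin (J i)) (m : Fin (M (k i j))),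
        (t (k i j) m * s i j) • (U i j ∩ (s i j)⁻¹ • V (k i j) m)
          ⊆ (t (k i j) m • (s i j • U i j)) ∩ (t (k i j) m • V (k i j) m) := by
      intro i j m
      rw [← Set.smul_set_inter, ← smul_smul]
      apply Set.smul_set_mono
      rw [Set.smul_set_inter]
      apply Set.inter_subset_inter_right
      rw [smul_smul, mul_inv_cancel, one_smul]
    refine Set.disjoint_of_subset (key i1 P.1 P.2) (key i2 Q.1 Q.2) ?_
    by_cases h : (⟨k i1 P.1, P.2⟩ : Σ l : Fin B.length, Fin (M l)) = ⟨k i2 Q.1, Q.2⟩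
    · -- same V-index: use disjointness of the first level
      have ht : t (k i1 P.1) P.2 = t (k i2 Q.1) Q.2 :=
        congrArg (fun x : Σ l : Fin B.length, Fin (M l) => t x.1 x.2) h
      have hpq' : (⟨i1, P.1⟩ : Σ i : Fin A.length, Fin (J i)) ≠ ⟨i2, Q.1⟩ := by
        intro he
        apply hpq
        obtain ⟨h1, h2⟩ := Sigma.mk.inj_iff.mp he
        subst h1
        refine Sigma.ext rfl (heq_of_eq ?_)
        have hP1 : P.1 = Q.1 := eq_of_heq h2
        have hPQ : P = Q := Sigma.ext hP1 (Sigma.mk.inj_iff.mp h).2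
        have := congrArg (Fintype.equivFin (Σ j : Fin (J i1), Fin (M (k i1 j)))) hPQ
        rw [hP, hQ, Equiv.apply_symm_apply, Equiv.apply_symm_apply] at this
        exact this
      have hkk : k i1 P.1 = k i2 Q.1 := (Sigma.mk.inj_iff.mp h).1
      have hd : Disjoint (s i1 P.1 • U i1 P.1) (s i2 Q.1 • U i2 Q.1) :=
        hdisj ⟨i1, P.1⟩ ⟨i2, Q.1⟩ hpq' hkk
      have hd2 : Disjoint (t (k i1 P.1) P.2 • (s i1 P.1 • U i1 P.1))
          (t (k i2 Q.1) Q.2 • (s i2 Q.1 • U i2 Q.1)) := by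
        rw [← ht, ← Set.image_smul, ← Set.image_smul]
        exact (Set.disjoint_image_iff (MulAction.injective _)).mpr hd
      exact Set.disjoint_of_subset Set.inter_subset_left Set.inter_subset_left hd2
    · have hd : Disjoint (t (k i1 P.1) P.2 • V (k i1 P.1) P.2)
          (t (k i2 Q.1) Q.2 • V (k i2 Q.1) Q.2) :=
        hdisj' ⟨k i1 P.1, P.2⟩ ⟨k i2 Q.1, Q.2⟩ h hk
      exact Set.disjoint_of_subset Set.inter_subset_right Set.inter_subset_right hd

/-- **Lemma 2.2.** Dynamical subequivalence is transitive. -/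
theorem dynSubeq_trans {X : Type*} [TopologicalSpace X] [CompactSpace X] [T2Space X]
    {G : Type*} [Group G] [MulAction G X]
    (hG : ∀ g : G, Continuous fun x : X => g • x)
    (a b c : List C(X, ℝ≥0)) (hab : DynSubeq G a b) (hbc : DynSubeq G b c) :
    DynSubeq G a c :=
  setSubeq_trans' hG _ _ _ hab hbc
end

section
/- For open sets O, V in X and n ∈ ℕ, the relation (n+1)O ≺ nV holds if and only if for every closed F ⊆ O there exist open sets U^(i)_j (j = 1,...,J_i, i = 1,...,n+1) and group elements s^(i)_j ∈ G such that: (1) F ⊆ ⋃_j U^(i)_j for each i; (2) s^(i)_j U^(i)_j ⊆ V for all i, j; and (3) the family {s^(i)_j U^(i)_j} has chromatic number at most n (i.e., it can be partitioned into at most n subfamilies each consisting of pairwise disjoint sets). -/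
open scoped Pointwise NNReal ENNReal

variable {X : Type*} [TopologicalSpace X] {G : Type*} [Group G] [MulAction G X]

def HasColorableCovers (G : Type*) [Group G] [MulAction G X] (F V : Set X) (m k : ℕ) : Prop :=
  ∃ (J : Fin m → ℕ) (U : (i : Fin m) → Fin (J i) → Set X) (s : (i : Fin m) → Fin (J i) → G),
    (∀ i j, IsOpen (U i j)) ∧
    (∀ i, F ⊆ ⋃ j, U i j) ∧
    (∀ i j, s i j • U i j ⊆ V) ∧
    (∃ c : (Σ i : Fin m, Fin (J i)) → Fin k,
      ∀ p q : Σ i : Fin m, Fin (J i), p ≠ q → c p = c q →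
        Disjoint (s p.1 p.2 • U p.1 p.2) (s q.1 q.2 • U q.1 q.2))

/- The closed sets `Fᵢ ⊆ O` may be replaced by the single closed set `⋃ᵢ Fᵢ ⊆ O`, and a
colouring of the translates is the same as an assignment of copies of `V`. -/
theorem setSubeq_replicate_iff (O V : Set X) (m k : ℕ) :
    SetSubeq G (List.replicate m O) (List.replicate k V) ↔
      ∀ F : Set X, IsClosed F → F ⊆ O → HasColorableCovers G F V m k := by
  suffices key : SetSubeq G (List.replicate m O) (List.replicate k V) ↔
      ∀ F : Set X, IsClosed F → F ⊆ O →
        HasColorableCovers G F V (List.replicate m O).length (List.replicate k V).length by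
    simpa only [List.length_replicate] using key
  constructor
  · rintro h F hF hFO
    obtain ⟨J, U, s, copy, hU, hcover, htrans, hdisj⟩ :=
      h (fun _ => F) fun _ => ⟨hF, by simpa using hFO⟩
    exact ⟨J, U, s, hU, hcover, fun i j => by simpa using htrans i j,
      fun p => copy p.1 p.2, hdisj⟩
  · intro h F hF
    obtain ⟨J, U, s, hU, hcover, htrans, c, hdisj⟩ :=
      h (⋃ i, F i) (isClosed_iUnion_of_finite fun i => (hF i).1)
        (Set.iUnion_subset fun i => by simpa using (hF i).2)
    exact ⟨J, U, s, fun i j => c ⟨i, j⟩, hU,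
      fun i => (Set.subset_iUnion F i).trans (hcover i),
      fun i j => by simpa using htrans i j, hdisj⟩

theorem replicate_subeq_iff_chromatic_general {X : Type*} [TopologicalSpace X] {G : Type*} [Group G]
    [MulAction G X] (O V : Set X) (n : ℕ) :
    SetSubeq G (List.replicate (n + 1) O) (List.replicate n V) ↔
      ∀ F : Set X, IsClosed F → F ⊆ O →
        ∃ (J : Fin (n + 1) → ℕ) (U : (i : Fin (n + 1)) → Fin (J i) → Set X)
          (s : (i : Fin (n + 1)) → Fin (J i) → G),
          (∀ i j, IsOpen (U i j)) ∧
          (∀ i, F ⊆ ⋃ j, U i j) ∧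
          (∀ i j, s i j • U i j ⊆ V) ∧
          (∃ c : (Σ i : Fin (n + 1), Fin (J i)) → Fin n,
            ∀ p q : Σ i : Fin (n + 1), Fin (J i), p ≠ q → c p = c q →
              Disjoint (s p.1 p.2 • U p.1 p.2) (s q.1 q.2 • U q.1 q.2)) :=
  setSubeq_replicate_iff O V (n + 1) n

/-- **Remark 1.5.** The relation `(n+1)O ≺ nV` holds iff for every closed `F ⊆ O` there are
open sets `U⁽ⁱ⁾ⱼ` and group elements `s⁽ⁱ⁾ⱼ` such that each family `{U⁽ⁱ⁾ⱼ}ⱼ` covers `F`,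
all translates `s⁽ⁱ⁾ⱼ U⁽ⁱ⁾ⱼ` are contained in `V`, and the family of translates has
chromatic number at most `n`. -/
theorem replicate_subeq_iff_chromatic {X : Type*} [TopologicalSpace X] [CompactSpace X]
    [T2Space X] {G : Type*} [Group G] [MulAction G X]
    (hG : ∀ g : G, Continuous fun x : X => g • x)
    (O V : Set X) (hO : IsOpen O) (hV : IsOpen V) (n : ℕ) :
    SetSubeq G (List.replicate (n + 1) O) (List.replicate n V) ↔
      ∀ F : Set X, IsClosed F → F ⊆ O →
        ∃ (J : Fin (n + 1) → ℕ) (U : (i : Fin (n + 1)) → Fin (J i) → Set X)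
          (s : (i : Fin (n + 1)) → Fin (J i) → G),
          (∀ i j, IsOpen (U i j)) ∧
          (∀ i, F ⊆ ⋃ j, U i j) ∧
          (∀ i j, s i j • U i j ⊆ V) ∧
          (∃ c : (Σ i : Fin (n + 1), Fin (J i)) → Fin n,
            ∀ p q : Σ i : Fin (n + 1), Fin (J i), p ≠ q → c p = c q →
              Disjoint (s p.1 p.2 • U p.1 p.2) (s q.1 q.2 • U q.1 q.2)) :=
  replicate_subeq_iff_chromatic_general O V n
end

section
/- Let a = (f_1,...,f_n) and b = (g_1,...,g_m) be tuples of nonnegative continuous functions on X. If a ≼ b in the dynamical subequivalence sense, then Diag(f_1,...,f_n) ≾ Diag(g_1,...,g_m) in the Cuntz subequivalence sense in the reduced crossed product C*-algebra C(X) ⋊_r G. -/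
open scoped Pointwise NNReal ENNReal

variable {X : Type*} [TopologicalSpace X] {G : Type*} [Group G] [MulAction G X]

/-- The complexification of a nonnegative continuous function. -/
noncomputable def toComplex {X : Type*} [TopologicalSpace X] (f : C(X, ℝ≥0)) : C(X, ℂ) :=
  ⟨fun x => ((f x : ℝ) : ℂ),
    Complex.continuous_ofReal.comp (NNReal.continuous_coe.comp f.continuous)⟩

/-- Cuntz subequivalence for matrices over a C*-algebra `A`:
`x ≾ y` iff there are `rₖ` with `rₖ* y rₖ → x`. -/
def CuntzSubeq {A : Type*} [NormedRing A] [StarRing A] [CStarRing A] [NormedAlgebra ℂ A]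
    {n m : ℕ} (x : Matrix (Fin n) (Fin n) A) (y : Matrix (Fin m) (Fin m) A) : Prop :=
  ∃ r : ℕ → Matrix (Fin m) (Fin n) A,
    Filter.Tendsto (fun k => (Matrix.conjTranspose (r k)) * y * r k) Filter.atTop (nhds x)


/-!
Given `ε > 0`, apply `a ≼ b` to the closed sets `{f i ≥ ε}` and take a partition of unity `w i j`
subordinate to the resulting cover `U i j`. The translates `s i j • (w i j * f i)` lie in the
support of `g (k i j)` and are pairwise disjoint when their `k`-indices agree, so each one is
`q i j * g (k i j) * q i j` for a continuous `q i j`, and the cross terms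
`q i j * g k * q i' j'` vanish. The matrix with entries `r k i = ∑_{j, k i j = k} q i j u (s i j)`
then satisfies `r* Diag(g) r = Diag((∑ j, w i j) * f i)`, which is entrywise within `ε` of
`Diag(f)` because `∑ j, w i j = 1` where `f i ≥ ε`.
-/

noncomputable def toComplexRingHom : C(X, ℝ≥0) →+* C(X, ℂ) where
  toFun := toComplex
  map_one' := by ext; simp [toComplex]
  map_mul' _ _ := by ext; simp [toComplex]
  map_zero' := by ext; simp [toComplex]
  map_add' _ _ := by ext; simp [toComplex]

@[simp]
theorem toComplexRingHom_apply (f : C(X, ℝ≥0)) : toComplexRingHom f = toComplex f := rfl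

theorem isSelfAdjoint_toComplex (f : C(X, ℝ≥0)) : IsSelfAdjoint (toComplex f) := by
  ext; simp [toComplex, Complex.conj_ofReal]

theorem norm_toComplex_mul_sub_le [CompactSpace X] {ε : ℝ≥0} {h f : C(X, ℝ≥0)}
    (h_le_one : ∀ x, h x ≤ 1) (h_eq_one : ∀ x, ε ≤ f x → h x = 1) :
    ‖toComplex (h * f) - toComplex f‖ ≤ ε := by
  refine (ContinuousMap.norm_le _ ε.coe_nonneg).mpr fun x => ?_
  have hx : ‖(toComplex (h * f) - toComplex f) x‖ = (1 - h x : ℝ) * f x := by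
    have : (1 - h x : ℝ) * f x = |(h x * f x : ℝ) - f x| := by
      have hle : (h x : ℝ) ≤ 1 := by exact_mod_cast h_le_one x
      rw [abs_of_nonpos (by nlinarith [(f x).coe_nonneg])]
      ring
    simp only [ContinuousMap.sub_apply, ContinuousMap.mul_apply, toComplex, ContinuousMap.coe_mk,
      NNReal.coe_mul, this]
    rw [← Complex.ofReal_sub, Complex.norm_real, Real.norm_eq_abs]
  rw [hx]
  rcases le_or_gt ε (f x) with hfx | hfx
  · simp [h_eq_one x hfx]
  · calc (1 - h x : ℝ) * f x ≤ f x :=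
          mul_le_of_le_one_left (f x).coe_nonneg (by linarith [(h x).coe_nonneg])
      _ ≤ ε := hfx.le

-- Mathlib's `IsSelfAdjoint.spectralRadius_eq_nnnorm` needs `CStarAlgebra A`, which also
-- demands `StarModule ℂ A`.
theorem IsSelfAdjoint.spectralRadius_eq_nnnorm_of_cstarRing {A : Type*} [NormedRing A]
    [NormedAlgebra ℂ A] [CompleteSpace A] [StarRing A] [CStarRing A] {a : A}
    (ha : IsSelfAdjoint a) : spectralRadius ℂ a = ‖a‖₊ := by
  refine tendsto_nhds_unique ?_
    (tendsto_const_nhds (x := (‖a‖₊ : ℝ≥0∞)) (f := Filter.atTop (α := ℕ)))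
  convert (spectrum.pow_nnnorm_pow_one_div_tendsto_nhds_spectralRadius a).comp
    (tendsto_pow_atTop_atTop_of_one_lt (α := ℕ) one_lt_two) using 1
  refine funext fun n => ?_
  rw [Function.comp_apply, ha.nnnorm_pow_two_pow, ENNReal.coe_pow, ← ENNReal.rpow_natCast,
    ← ENNReal.rpow_mul]
  simp

theorem norm_map_le_of_isSelfAdjoint {B A : Type*} [CStarAlgebra B] [NormedRing A]
    [NormedAlgebra ℂ A] [CompleteSpace A] [StarRing A] [CStarRing A] (φ : B →⋆ₐ[ℂ] A) {w : B}
    (hw : IsSelfAdjoint w) : ‖φ w‖ ≤ ‖w‖ := by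
  have h : spectralRadius ℂ (φ w) ≤ spectralRadius ℂ w :=
    iSup_le_iSup_of_subset (AlgHom.spectrum_apply_subset (φ : B →ₐ[ℂ] A) w)
  rw [(hw.map φ).spectralRadius_eq_nnnorm_of_cstarRing, hw.spectralRadius_eq_nnnorm,
    ENNReal.coe_le_coe] at h
  exact_mod_cast h

namespace Matrix

theorem conjTranspose_sum_single_mul_diagonal_mul_sum_single {ι m n R : Type*} [Fintype ι]
    [DecidableEq ι] [Fintype m] [DecidableEq m] [DecidableEq n] [Semiring R] [StarRing R]
    (p : ι → n) (k : ι → m) (x : ι → R) (d : m → R)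
    (horth : ∀ a b, a ≠ b → k a = k b → star (x a) * d (k a) * x b = 0) :
    (∑ a, single (k a) (p a) (x a))ᴴ * diagonal d * ∑ a, single (k a) (p a) (x a) =
      ∑ a, single (p a) (p a) (star (x a) * d (k a) * x a) := by
  have hterm : ∀ a b, single (p a) (k a) (star (x a)) * diagonal d * single (k b) (p b) (x b) =
      if a = b then single (p a) (p a) (star (x a) * d (k a) * x a) else 0 := by
    intro a b
    rw [single_mul_mul_single, diagonal_apply]
    split_ifs with hk hab hab
    · subst hab; rfl
    · rw [horth a b hab hk, single_zero]
    · exact absurd (congrArg k hab) hk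
    · rw [mul_zero, zero_mul, single_zero]
  simp only [conjTranspose_sum, conjTranspose_single, Matrix.sum_mul, Matrix.mul_sum, hterm,
    Finset.sum_ite_eq', Finset.mem_univ, if_true]

end Matrix

theorem exists_mul_mul_eq_of_ne_zero_on_tsupport [CompactSpace X] {θ g : C(X, ℝ≥0)}
    (hg : ∀ x ∈ tsupport θ, g x ≠ 0) : ∃ q : C(X, ℝ≥0), q * g * q = θ ∧ osupp q ⊆ osupp θ := by
  obtain ⟨δ, hδ, hδg⟩ : ∃ δ : ℝ≥0, 0 < δ ∧ ∀ x ∈ tsupport θ, δ ≤ g x := by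
    rcases (tsupport θ).eq_empty_or_nonempty with hempty | hne
    · exact ⟨1, one_pos, by simp [hempty]⟩
    obtain ⟨z, hz, hmin⟩ :=
      (isClosed_tsupport θ).isCompact.exists_isMinOn hne g.continuous.continuousOn
    exact ⟨g z, pos_iff_ne_zero.mpr (hg z hz), fun x hx => hmin hx⟩
  have hden : ∀ x, NNReal.sqrt (max (g x) δ) ≠ 0 := fun x =>
    (NNReal.sqrt_pos.mpr (lt_max_of_lt_right hδ)).ne'
  -- on `tsupport θ` the maximum is `g`, so `q = √(θ / g)` there; elsewhere `q = 0`
  refine ⟨⟨fun x => NNReal.sqrt (θ x) / NNReal.sqrt (max (g x) δ),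
    (NNReal.continuous_sqrt.comp θ.continuous).div₀
      (NNReal.continuous_sqrt.comp (g.continuous.max continuous_const)) hden⟩, ?_, ?_⟩
  · ext1 x
    rcases eq_or_ne (θ x) 0 with hθ | hθ
    · simp [hθ]
    have hx : x ∈ tsupport θ := subset_tsupport θ hθ
    have hmax : max (g x) δ = g x := max_eq_left (hδg x hx)
    simp only [ContinuousMap.mul_apply, ContinuousMap.coe_mk, hmax]
    rw [div_mul_eq_mul_div, div_mul_div_comm, mul_right_comm, NNReal.mul_self_sqrt,
      NNReal.mul_self_sqrt, mul_div_cancel_right₀ _ (hg x hx)]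
  · intro x hx hθ
    simp [osupp, hθ] at hx

theorem SetSubeq.exists_cover_ofFn {n m : ℕ} {A : Fin n → Set X} {B : Fin m → Set X}
    (h : SetSubeq G (List.ofFn A) (List.ofFn B)) {F : Fin n → Set X}
    (hF : ∀ i, IsClosed (F i)) (hFA : ∀ i, F i ⊆ A i) :
    ∃ (J : Fin n → ℕ) (U : (Σ i, Fin (J i)) → Set X) (s : (Σ i, Fin (J i)) → G)
      (k : (Σ i, Fin (J i)) → Fin m),
      (∀ a, IsOpen (U a)) ∧ (∀ i, F i ⊆ ⋃ j, U ⟨i, j⟩) ∧ (∀ a, s a • U a ⊆ B (k a)) ∧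
      ∀ a b, a ≠ b → k a = k b → Disjoint (s a • U a) (s b • U b) := by
  have hn : (List.ofFn A).length = n := List.length_ofFn
  have hm : (List.ofFn B).length = m := List.length_ofFn
  obtain ⟨J, U, s, k, hU, hFU, hsU, hdisj⟩ :=
    h (fun i => F (Fin.cast hn i)) fun i => ⟨hF _, by rw [List.get_ofFn]; exact hFA _⟩
  let c : (Σ i : Fin n, Fin (J (Fin.cast hn.symm i))) → Σ i, Fin (J i) :=
    fun a => ⟨Fin.cast hn.symm a.1, a.2⟩
  have hc : Function.Injective c := by
    rintro ⟨i, j⟩ ⟨i', j'⟩ hii'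
    obtain ⟨hi, hj⟩ := Sigma.mk.inj_iff.mp hii'
    exact Sigma.ext (Fin.cast_injective _ hi) hj
  refine ⟨fun i => J (Fin.cast hn.symm i), fun a => U (c a).1 (c a).2,
    fun a => s (c a).1 (c a).2, fun a => Fin.cast hm (k (c a).1 (c a).2), fun a => hU _ _,
    fun i => by simpa using hFU (Fin.cast hn.symm i),
    fun a => by simpa only [List.get_ofFn] using hsU (c a).1 (c a).2,
    fun a b hab hk => hdisj (c a) (c b) (hc.ne hab) (Fin.cast_injective _ hk)⟩

theorem exists_sum_eq_one_on_of_subset_iUnion [NormalSpace X] [ParacompactSpace X] {ι : Type*}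
    [Fintype ι] {F : Set X} (hF : IsClosed F) {U : ι → Set X} (hU : ∀ j, IsOpen (U j))
    (hFU : F ⊆ ⋃ j, U j) :
    ∃ w : ι → C(X, ℝ≥0), (∀ j, tsupport (w j) ⊆ U j) ∧ (∀ x, ∑ j, w j x ≤ 1) ∧
      ∀ x ∈ F, ∑ j, w j x = 1 := by
  obtain ⟨φ, hφ⟩ := PartitionOfUnity.exists_isSubordinate hF U hU hFU
  have hsum : ∀ x, ((∑ j, (φ j x).toNNReal : ℝ≥0) : ℝ) = ∑ j, φ j x := fun x => by
    rw [NNReal.coe_sum]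
    exact Finset.sum_congr rfl fun j _ => Real.coe_toNNReal _ (φ.nonneg j x)
  refine ⟨fun j => ⟨fun x => (φ j x).toNNReal, continuous_real_toNNReal.comp (φ j).continuous⟩,
    fun j => ?_, fun x => ?_, fun x hx => ?_⟩
  · refine (closure_mono fun x hx => ?_).trans (hφ j)
    exact fun h0 => hx (by simp [h0])
  · simp only [ContinuousMap.coe_mk]
    rw [← NNReal.coe_le_coe, hsum, NNReal.coe_one, ← finsum_eq_sum_of_fintype]
    exact φ.sum_le_one x
  · simp only [ContinuousMap.coe_mk]
    rw [← NNReal.coe_inj, hsum, NNReal.coe_one, ← finsum_eq_sum_of_fintype]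
    exact φ.sum_eq_one hx

theorem DynSubeq.exists_translated_factorization [CompactSpace X] [T2Space X]
    [ContinuousConstSMul G X] {n m : ℕ} {f : Fin n → C(X, ℝ≥0)} {g : Fin m → C(X, ℝ≥0)}
    (hab : DynSubeq G (List.ofFn f) (List.ofFn g)) {ε : ℝ≥0} (hε : 0 < ε) :
    ∃ (J : Fin n → ℕ) (s : (Σ i, Fin (J i)) → G) (k : (Σ i, Fin (J i)) → Fin m)
      (q w : (Σ i, Fin (J i)) → C(X, ℝ≥0)),
      (∀ a b, a ≠ b → k a = k b → q a * g (k a) * q b = 0) ∧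
      (∀ a x, (q a * g (k a) * q a) (s a • x) = w a x * f a.1 x) ∧
      (∀ i x, ∑ j, w ⟨i, j⟩ x ≤ 1) ∧ (∀ i x, ε ≤ f i x → ∑ j, w ⟨i, j⟩ x = 1) := by
  have hF : ∀ i, IsClosed {x | ε ≤ f i x} := fun i =>
    isClosed_le continuous_const (f i).continuous
  obtain ⟨J, U, s, k, hU, hFU, hsU, hdisj⟩ :=
    SetSubeq.exists_cover_ofFn (A := osupp ∘ f) (B := osupp ∘ g)
      (by simpa only [DynSubeq, List.map_ofFn] using hab) hF fun i x hx => (hε.trans_le hx).ne'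
  choose w hwU hw_le hw_eq using fun i =>
    exists_sum_eq_one_on_of_subset_iUnion (hF i) (fun j => hU ⟨i, j⟩) (hFU i)
  let θ : (Σ i, Fin (J i)) → C(X, ℝ≥0) := fun a =>
    (w a.1 a.2 * f a.1).comp ⟨fun x => (s a)⁻¹ • x, continuous_const_smul _⟩
  have hθU : ∀ a, tsupport (θ a) ⊆ s a • U a := fun a => by
    change tsupport (⇑(w a.1 a.2 * f a.1) ∘ Homeomorph.smul (s a)⁻¹) ⊆ _
    rw [tsupport_comp_eq_preimage]
    change (fun x => (s a)⁻¹ • x) ⁻¹' _ ⊆ _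
    rw [Set.preimage_smul, inv_inv]
    exact Set.smul_set_mono ((tsupport_mul_subset_left).trans (hwU a.1 a.2))
  choose q hqθ hq_supp using fun a =>
    exists_mul_mul_eq_of_ne_zero_on_tsupport (θ := θ a) (g := g (k a)) fun y hy => hsU a (hθU a hy)
  refine ⟨J, s, k, q, fun a => w a.1 a.2, fun a b hne hk => ?_, fun a x => ?_, hw_le, hw_eq⟩
  · ext1 y
    rw [ContinuousMap.zero_apply]
    by_contra hy
    have hqa : q a y ≠ 0 := left_ne_zero_of_mul (left_ne_zero_of_mul hy)
    have hqb : q b y ≠ 0 := right_ne_zero_of_mul hy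
    exact Set.disjoint_left.mp (hdisj a b hne hk) (hθU a (subset_tsupport _ (hq_supp a hqa)))
      (hθU b (subset_tsupport _ (hq_supp b hqb)))
  · simp [hqθ, θ]

section CovariantRepresentation

open Matrix

variable [ContinuousConstSMul G X] {A : Type*} [NormedRing A] [StarRing A] [NormedAlgebra ℂ A]
  {π : C(X, ℂ) →⋆ₐ[ℂ] A} {u : G → Aˣ}

theorem star_mul_map_mul_eq_of_apply_smul (hu : ∀ g : G, ((u g)⁻¹ : Aˣ) = (star (u g : A) : A))
    (hcov : ∀ (g : G) (f : C(X, ℂ)), (u g : A) * π f * ((u g)⁻¹ : Aˣ) =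
      π ⟨fun x => f (g⁻¹ • x), f.continuous.comp (continuous_const_smul g⁻¹)⟩)
    {s : G} {θ v : C(X, ℂ)} (hθv : ∀ x, θ (s • x) = v x) :
    star (u s : A) * π θ * u s = π v := by
  have hθ : θ = ⟨fun x => v (s⁻¹ • x), v.continuous.comp (continuous_const_smul s⁻¹)⟩ := by
    ext y
    simpa using hθv (s⁻¹ • y)
  rw [← hu, hθ, ← hcov, mul_assoc, mul_assoc, Units.inv_mul, mul_one, ← mul_assoc,
    Units.inv_mul, one_mul]

theorem star_mul_map_toComplex_mul (p q g : C(X, ℝ≥0)) (v w : A) :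
    star (π (toComplex p) * v) * π (toComplex g) * (π (toComplex q) * w) =
      star v * π (toComplex (p * g * q)) * w := by
  rw [star_mul, ← map_star, (isSelfAdjoint_toComplex p).star_eq]
  simp only [← toComplexRingHom_apply, map_mul, mul_assoc]

theorem DynSubeq.exists_conjTranspose_mul_diagonal_mul_eq [CompactSpace X] [T2Space X]
    (hu : ∀ g : G, ((u g)⁻¹ : Aˣ) = (star (u g : A) : A))
    (hcov : ∀ (g : G) (f : C(X, ℂ)), (u g : A) * π f * ((u g)⁻¹ : Aˣ) =
      π ⟨fun x => f (g⁻¹ • x), f.continuous.comp (continuous_const_smul g⁻¹)⟩)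
    {n m : ℕ} {f : Fin n → C(X, ℝ≥0)} {g : Fin m → C(X, ℝ≥0)}
    (hab : DynSubeq G (List.ofFn f) (List.ofFn g)) {ε : ℝ≥0} (hε : 0 < ε) :
    ∃ h : Fin n → C(X, ℝ≥0), (∀ i x, h i x ≤ 1) ∧ (∀ i x, ε ≤ f i x → h i x = 1) ∧
      ∃ r : Matrix (Fin m) (Fin n) A,
        rᴴ * diagonal (fun j => π (toComplex (g j))) * r =
          diagonal fun i => π (toComplex (h i * f i)) := by
  classical
  obtain ⟨J, s, k, q, w, horth, htrans, hw_le, hw_eq⟩ := hab.exists_translated_factorization hε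
  let x : (Σ i, Fin (J i)) → A := fun a => π (toComplex (q a)) * u (s a)
  have hx_orth : ∀ a b, a ≠ b → k a = k b → star (x a) * π (toComplex (g (k a))) * x b = 0 :=
    fun a b hne hk => by
      rw [star_mul_map_toComplex_mul, horth a b hne hk, ← toComplexRingHom_apply, map_zero,
        map_zero, mul_zero, zero_mul]
  have hx_diag : ∀ a, star (x a) * π (toComplex (g (k a))) * x a =
      π (toComplex (w a * f a.1)) := fun a => by
    rw [star_mul_map_toComplex_mul]
    exact star_mul_map_mul_eq_of_apply_smul hu hcov fun y =>
      congrArg (fun t : ℝ≥0 => ((t : ℝ) : ℂ)) (htrans a y)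
  refine ⟨fun i => ∑ j, w ⟨i, j⟩, fun i y => by simpa using hw_le i y,
    fun i y hy => by simpa using hw_eq i y hy, ∑ a, single (k a) a.1 (x a), ?_⟩
  rw [conjTranspose_sum_single_mul_diagonal_mul_sum_single _ _ _ _ hx_orth, Fintype.sum_sigma,
    ← sum_single_eq_diagonal]
  refine Finset.sum_congr rfl fun i _ => ?_
  simp only [hx_diag]
  simp only [Finset.sum_mul, ← toComplexRingHom_apply, map_sum]
  exact (map_sum (singleAddMonoidHom (α := A) i i) _ _).symm

end CovariantRepresentation

open Matrix in
theorem cuntzSubeq_of_forall_exists_norm_sub_le {A : Type*} [NormedRing A] [StarRing A]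
    [CStarRing A] [NormedAlgebra ℂ A] {n m : ℕ} {x : Matrix (Fin n) (Fin n) A}
    {y : Matrix (Fin m) (Fin m) A}
    (h : ∀ ε : ℝ, 0 < ε → ∃ r : Matrix (Fin m) (Fin n) A, ∀ i i', ‖(rᴴ * y * r - x) i i'‖ ≤ ε) :
    CuntzSubeq x y := by
  choose r hr using fun N : ℕ => h (1 / (N + 1)) Nat.one_div_pos_of_nat
  refine ⟨r, tendsto_pi_nhds.mpr fun i => tendsto_pi_nhds.mpr fun i' => ?_⟩
  rw [tendsto_iff_norm_sub_tendsto_zero]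
  exact squeeze_zero (fun _ => norm_nonneg _) (fun N => hr N i i')
    tendsto_one_div_add_atTop_nhds_zero_nat

/-- `C(X) ⋊_r G` is modelled by an arbitrary covariant representation: a `*`-homomorphism
`π : C(X) → A` into a C*-algebra together with unitaries `u : G → A` implementing the action. -/
theorem dynSubeq_implies_cuntzSubeq_general {X : Type*} [TopologicalSpace X] [CompactSpace X]
    [T2Space X] {G : Type*} [Group G] [MulAction G X]
    (hG : ∀ g : G, Continuous fun x : X => g • x)
    {A : Type*} [NormedRing A] [StarRing A] [CStarRing A] [NormedAlgebra ℂ A]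
    [CompleteSpace A]
    (π : C(X, ℂ) →⋆ₐ[ℂ] A)
    (u : G → Aˣ) (hu : ∀ g : G, ((u g)⁻¹ : Aˣ) = (star (u g : A) : A))
    (hcov : ∀ (g : G) (f : C(X, ℂ)),
      (u g : A) * π f * ((u g)⁻¹ : Aˣ) =
        π ⟨fun x => f (g⁻¹ • x), f.continuous.comp (hG g⁻¹)⟩)
    {n m : ℕ} (f : Fin n → C(X, ℝ≥0)) (g : Fin m → C(X, ℝ≥0))
    (hab : DynSubeq G (List.ofFn f) (List.ofFn g)) :
    CuntzSubeq (Matrix.diagonal fun i => π (toComplex (f i)))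
      (Matrix.diagonal fun j => π (toComplex (g j))) := by
  have : ContinuousConstSMul G X := ⟨hG⟩
  refine cuntzSubeq_of_forall_exists_norm_sub_le fun ε hε => ?_
  obtain ⟨h, h_le_one, h_eq_one, r, hr⟩ :=
    hab.exists_conjTranspose_mul_diagonal_mul_eq hu hcov (Real.toNNReal_pos.mpr hε)
  refine ⟨r, fun i i' => ?_⟩
  rw [hr, Matrix.sub_apply]
  rcases eq_or_ne i i' with rfl | hii'
  · rw [Matrix.diagonal_apply_eq, Matrix.diagonal_apply_eq, ← map_sub]
    calc ‖π (toComplex (h i * f i) - toComplex (f i))‖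
        ≤ ‖toComplex (h i * f i) - toComplex (f i)‖ :=
          norm_map_le_of_isSelfAdjoint π
            ((isSelfAdjoint_toComplex _).sub (isSelfAdjoint_toComplex _))
      _ ≤ ε.toNNReal := norm_toComplex_mul_sub_le (h_le_one i) (h_eq_one i)
      _ = ε := Real.coe_toNNReal _ hε.le
  · simp [hii', hε.le]

/-- **Proposition 2.3.** If `a ≼ b` dynamically, then the corresponding diagonal matrices
are Cuntz subequivalent in (any covariant representation of, e.g. the reduced crossed
product) `C(X) ⋊_r G`: here `A` is a C*-algebra, `π : C(X) → A` a unital `*`-homomorphism,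
and `u : G → A` unitaries implementing the action. -/
theorem dynSubeq_implies_cuntzSubeq {X : Type*} [TopologicalSpace X] [CompactSpace X]
    [T2Space X] {G : Type*} [Group G] [MulAction G X]
    (hG : ∀ g : G, Continuous fun x : X => g • x)
    {A : Type*} [NormedRing A] [StarRing A] [CStarRing A] [NormedAlgebra ℂ A]
    [CompleteSpace A]
    (π : C(X, ℂ) →⋆ₐ[ℂ] A) (hπ : Function.Injective π)
    (u : G → Aˣ) (hu : ∀ g : G, ((u g)⁻¹ : Aˣ) = (star (u g : A) : A))
    (hcov : ∀ (g : G) (f : C(X, ℂ)),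
      (u g : A) * π f * ((u g)⁻¹ : Aˣ) =
        π ⟨fun x => f (g⁻¹ • x), f.continuous.comp (hG g⁻¹)⟩)
    {n m : ℕ} (f : Fin n → C(X, ℝ≥0)) (g : Fin m → C(X, ℝ≥0))
    (hab : DynSubeq G (List.ofFn f) (List.ofFn g)) :
    CuntzSubeq (Matrix.diagonal fun i => π (toComplex (f i)))
      (Matrix.diagonal fun j => π (toComplex (g j))) :=
  dynSubeq_implies_cuntzSubeq_general hG π u hu hcov f g hab
end

section
/- For all a, b ∈ K(X,G), the following are equivalent: (i) a ≼ b; (ii) (a − ε)_+ ≼ b for all ε > 0; (iii) for all ε > 0 there exists δ > 0 such that (a − ε)_+ ≼ (b − δ)_+. -/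
open scoped Pointwise NNReal ENNReal

variable {X : Type*} [TopologicalSpace X] {G : Type*} [Group G] [MulAction G X]

/-!
Cutting down only shrinks open supports, which gives (i) ⇒ (ii) and (iii) ⇒ (ii). A closed, hence
compact, subset of the open support of `f` already lies in the open support of some `(f - ε)₊`,
which gives (ii) ⇒ (i). For (i) ⇒ (iii), shrink the open cover witnessing `a ≼ b` on the closed
sets `{a ≥ ε}` so that the translated closures become compact subsets of the supports of `b`;
on finitely many such compact sets `b` is bounded below by a common `δ > 0`.
-/

section

open Function Filter Topology

variable {ι ι' κ κ' : Type*}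

variable (G) in
/-- The conclusion of `SetSubeq` for a single family `F`, with arbitrary index types. -/
def SubeqCover (F : ι → Set X) (B : κ → Set X) : Prop :=
  ∃ (J : ι → ℕ)
    (U : (i : ι) → Fin (J i) → Set X)
    (s : (i : ι) → Fin (J i) → G)
    (k : (i : ι) → Fin (J i) → κ),
    (∀ i j, IsOpen (U i j)) ∧
    (∀ i, F i ⊆ ⋃ j, U i j) ∧
    (∀ i j, (s i j) • U i j ⊆ B (k i j)) ∧
    (∀ (p q : Σ i : ι, Fin (J i)), p ≠ q → k p.1 p.2 = k q.1 q.2 →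
      Disjoint ((s p.1 p.2) • U p.1 p.2) ((s q.1 q.2) • U q.1 q.2))

theorem setSubeq_iff {A B : List (Set X)} :
    SetSubeq G A B ↔ ∀ F : Fin A.length → Set X,
      (∀ i, IsClosed (F i) ∧ F i ⊆ A.get i) → SubeqCover G F B.get :=
  Iff.rfl

namespace SubeqCover

variable {F F' : ι → Set X} {B : κ → Set X} {B' : κ' → Set X}

theorem mono_left (h : SubeqCover G F B) (hF : ∀ i, F' i ⊆ F i) : SubeqCover G F' B := by
  obtain ⟨J, U, s, k, hU, hFU, hsU, hdisj⟩ := h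
  exact ⟨J, U, s, k, hU, fun i => (hF i).trans (hFU i), hsU, hdisj⟩

theorem comp_left (h : SubeqCover G F B) {e : ι' → ι} (he : Injective e) :
    SubeqCover G (F ∘ e) B := by
  obtain ⟨J, U, s, k, hU, hFU, hsU, hdisj⟩ := h
  refine ⟨J ∘ e, fun i => U (e i), fun i => s (e i), fun i => k (e i),
    fun i => hU (e i), fun i => hFU (e i), fun i => hsU (e i), fun p q hpq => ?_⟩
  exact hdisj _ _ ((he.sigma_map fun _ => injective_id).ne hpq)

theorem mono_right (h : SubeqCover G F B) {e : κ → κ'} (he : Injective e)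
    (hB : ∀ c, B c ⊆ B' (e c)) : SubeqCover G F B' := by
  obtain ⟨J, U, s, k, hU, hFU, hsU, hdisj⟩ := h
  exact ⟨J, U, s, fun i j => e (k i j), hU, hFU, fun i j => (hsU i j).trans (hB _),
    fun p q hpq hk => hdisj p q hpq (he hk)⟩

/-- The compact sets are the translates of the closures of a shrinking of the cover, grouped by
target. -/
theorem exists_isCompact_subset [T2Space X] [LocallyCompactSpace X] [ContinuousConstSMul G X]
    [Finite ι] (hF : ∀ i, IsCompact (F i)) (h : SubeqCover G F B) :
    ∃ K : κ → Set X, (∀ c, IsCompact (K c)) ∧ (∀ c, K c ⊆ B c) ∧ SubeqCover G F K := by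
  obtain ⟨J, U, s, k, hU, hFU, hsU, hdisj⟩ := h
  have shrink : ∀ i, ∃ V : Fin (J i) → Set X, F i ⊆ ⋃ j, V j ∧ (∀ j, IsOpen (V j)) ∧
      (∀ j, closure (V j) ⊆ U i j) ∧ ∀ j, IsCompact (closure (V j)) := fun i =>
    exists_subset_iUnion_closure_subset_t2space (hF i) (hU i) (fun _ _ => Set.toFinite _)
      (hFU i)
  choose V hFV hV hVU hVc using shrink
  have hVU' : ∀ i j, V i j ⊆ U i j := fun i j => subset_closure.trans (hVU i j)
  refine ⟨fun c => ⋃ (p : Σ i, Fin (J i)) (_ : k p.1 p.2 = c), s p.1 p.2 • closure (V p.1 p.2),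
    fun c => isCompact_iUnion fun p => isCompact_iUnion fun _ => (hVc p.1 p.2).smul _, ?_,
    J, V, s, k, hV, hFV, fun i j => ?_, fun p q hpq hk => ?_⟩
  · simp only [Set.iUnion_subset_iff]
    rintro c p rfl
    exact (Set.smul_set_mono (hVU _ _)).trans (hsU _ _)
  · exact (Set.smul_set_mono subset_closure).trans
      (Set.subset_iUnion₂_of_subset (⟨i, j⟩ : Σ i, Fin (J i)) rfl subset_rfl)
  · exact (hdisj p q hpq hk).mono (Set.smul_set_mono (hVU' _ _)) (Set.smul_set_mono (hVU' _ _))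

end SubeqCover

namespace SetSubeq

variable {A A' B B' : List (Set X)}

theorem subeqCover {n : ℕ} (h : SetSubeq G A B) (hn : A.length = n) {F : Fin n → Set X}
    (hF : ∀ i : Fin n, IsClosed (F i) ∧ F i ⊆ A[i.1]'(hn ▸ i.2)) : SubeqCover G F B.get :=
  (setSubeq_iff.1 h (F ∘ Fin.cast hn) fun _ => hF _).comp_left (Fin.cast_injective hn.symm)

theorem of_subeqCover {n m : ℕ} {F : Fin n → Set X} {K : Fin m → Set X}
    (h : SubeqCover G F K) (hn : A.length = n) (hA : ∀ i : Fin n, A[i.1]'(hn ▸ i.2) ⊆ F i)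
    (hm : B.length = m) (hB : ∀ c : Fin m, K c ⊆ B[c.1]'(hm ▸ c.2)) : SetSubeq G A B :=
  fun _ hF' => ((h.comp_left (Fin.cast_injective hn)).mono_left fun i =>
    (hF' i).2.trans (hA (i.cast hn))).mono_right (Fin.cast_injective hm.symm) hB

theorem mono_left (h : SetSubeq G A B) (hA : List.Forall₂ (· ⊆ ·) A' A) : SetSubeq G A' B :=
  fun _ hF => h.subeqCover hA.length_eq.symm fun i =>
    ⟨(hF i).1, (hF i).2.trans (hA.get _ _)⟩

theorem mono_right (h : SetSubeq G A B) (hB : List.Forall₂ (· ⊆ ·) B B') : SetSubeq G A B' :=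
  fun F hF =>
    (setSubeq_iff.1 h F hF).mono_right (Fin.cast_injective hB.length_eq) fun _ => hB.get _ _

end SetSubeq

@[simp]
theorem osupp_cutFun (f : C(X, ℝ≥0)) (ε : ℝ≥0) : osupp (cutFun f ε) = {x | ε < f x} := by
  ext x
  simp [osupp, cutFun, ← pos_iff_ne_zero]

theorem osupp_cutFun_subset (f : C(X, ℝ≥0)) (ε : ℝ≥0) : osupp (cutFun f ε) ⊆ osupp f := by
  intro x hx
  simp only [osupp_cutFun, Set.mem_ofPred_eq] at hx
  exact (pos_of_gt hx).ne'

theorem forall₂_osupp_cutList (a : List C(X, ℝ≥0)) (ε : ℝ≥0) :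
    List.Forall₂ (· ⊆ ·) ((cutList a ε).map osupp) (a.map osupp) := by
  simpa [cutList, List.forall₂_map_left_iff, List.forall₂_map_right_iff, List.forall₂_same]
    using fun f _ => osupp_cutFun_subset f ε

theorem IsCompact.eventually_subset_osupp_cutFun {K : Set X} (hK : IsCompact K)
    {f : C(X, ℝ≥0)} (hKf : K ⊆ osupp f) : ∀ᶠ δ in 𝓝 0, K ⊆ osupp (cutFun f δ) := by
  obtain ⟨c, hc, hcf⟩ := hK.exists_forall_le' f.continuous.continuousOn
    fun x hx => pos_iff_ne_zero.2 (hKf hx)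
  filter_upwards [Iio_mem_nhds hc] with δ hδ x hx
  simpa using hδ.trans_le (hcf x hx)

theorem exists_pos_forall_subset_osupp_cutFun [Finite ι] {K : ι → Set X}
    (hK : ∀ i, IsCompact (K i)) {f : ι → C(X, ℝ≥0)} (hKf : ∀ i, K i ⊆ osupp (f i)) :
    ∃ δ > 0, ∀ i, K i ⊆ osupp (cutFun (f i) δ) := by
  have hev : ∀ᶠ δ in 𝓝[>] 0, ∀ i, K i ⊆ osupp (cutFun (f i) δ) :=
    nhdsWithin_le_nhds (eventually_all.2 fun i => (hK i).eventually_subset_osupp_cutFun (hKf i))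
  obtain ⟨δ, hδK, hδ⟩ := (hev.and self_mem_nhdsWithin).exists
  exact ⟨δ, hδ, hδK⟩

namespace DynSubeq

variable {a b : List C(X, ℝ≥0)}

theorem cutList_left (h : DynSubeq G a b) (ε : ℝ≥0) : DynSubeq G (cutList a ε) b :=
  SetSubeq.mono_left h (forall₂_osupp_cutList a ε)

theorem of_cutList_right {δ : ℝ≥0} (h : DynSubeq G a (cutList b δ)) : DynSubeq G a b :=
  SetSubeq.mono_right h (forall₂_osupp_cutList b δ)

theorem of_forall_cutList_left [CompactSpace X]
    (h : ∀ ε : ℝ≥0, 0 < ε → DynSubeq G (cutList a ε) b) : DynSubeq G a b := by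
  intro F hF
  obtain ⟨ε, hε, hFε⟩ := exists_pos_forall_subset_osupp_cutFun (fun i => (hF i).1.isCompact)
    (f := fun i => a[i.1]'(by simpa using i.2)) fun i => by simpa using (hF i).2
  exact (h ε hε).subeqCover (by simp [cutList]) fun i =>
    ⟨(hF i).1, by simpa [cutList] using hFε i⟩

theorem exists_cutList_cutList [CompactSpace X] [T2Space X] [ContinuousConstSMul G X]
    (h : DynSubeq G a b) {ε : ℝ≥0} (hε : 0 < ε) :
    ∃ δ : ℝ≥0, 0 < δ ∧ DynSubeq G (cutList a ε) (cutList b δ) := by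
  let F (i : Fin (a.map osupp).length) : Set X := {x | ε ≤ (a[i.1]'(by simpa using i.2)) x}
  have hF : ∀ i, IsClosed (F i) ∧ F i ⊆ (a.map osupp).get i := fun i =>
    ⟨isClosed_le continuous_const (ContinuousMap.continuous _),
      fun x hx => by simpa [osupp] using (hε.trans_le hx).ne'⟩
  obtain ⟨K, hK, hKb, hFK⟩ :=
    (setSubeq_iff.1 h F hF).exists_isCompact_subset fun i => (hF i).1.isCompact
  obtain ⟨δ, hδ, hKδ⟩ := exists_pos_forall_subset_osupp_cutFun hK
    (f := fun c => b[c.1]'(by simpa using c.2)) fun c => by simpa using hKb c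
  refine ⟨δ, hδ, SetSubeq.of_subeqCover hFK (by simp [cutList]) (fun i x hx => ?_)
    (by simp [cutList]) fun c => by simpa [cutList] using hKδ c⟩
  simp only [cutList, List.getElem_map, osupp_cutFun, Set.mem_ofPred_eq] at hx
  exact hx.le

end DynSubeq

end

theorem dynSubeq_cutdown_characterization_general {X : Type*} [TopologicalSpace X] [CompactSpace X]
    [T2Space X]
    {G : Type*} [Group G] [MulAction G X]
    (hG : ∀ g : G, Continuous fun x : X => g • x)
    (a b : List C(X, ℝ≥0)) :
    (DynSubeq G a b ↔ ∀ ε : ℝ≥0, 0 < ε → DynSubeq G (cutList a ε) b) ∧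
    (DynSubeq G a b ↔ ∀ ε : ℝ≥0, 0 < ε → ∃ δ : ℝ≥0, 0 < δ ∧
      DynSubeq G (cutList a ε) (cutList b δ)) := by
  have : ContinuousConstSMul G X := ⟨hG⟩
  refine ⟨⟨fun h ε _ => h.cutList_left ε, DynSubeq.of_forall_cutList_left⟩,
    ⟨fun h _ hε => h.exists_cutList_cutList hε, fun h => ?_⟩⟩
  refine DynSubeq.of_forall_cutList_left fun ε hε => ?_
  obtain ⟨δ, -, hδ⟩ := h ε hε
  exact hδ.of_cutList_right

/-- **Proposition 3.2.** For `a, b ∈ K(X, G)`: `a ≼ b` iff `(a - ε)₊ ≼ b` for all `ε > 0`,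
iff for all `ε > 0` there exists `δ > 0` with `(a - ε)₊ ≼ (b - δ)₊`. -/
theorem dynSubeq_cutdown_characterization {X : Type*} [TopologicalSpace X] [CompactSpace X]
    [T2Space X] [TopologicalSpace.MetrizableSpace X]
    {G : Type*} [Group G] [MulAction G X]
    (hG : ∀ g : G, Continuous fun x : X => g • x)
    (a b : List C(X, ℝ≥0)) :
    (DynSubeq G a b ↔ ∀ ε : ℝ≥0, 0 < ε → DynSubeq G (cutList a ε) b) ∧
    (DynSubeq G a b ↔ ∀ ε : ℝ≥0, 0 < ε → ∃ δ : ℝ≥0, 0 < δ ∧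
      DynSubeq G (cutList a ε) (cutList b δ)) :=
  dynSubeq_cutdown_characterization_general hG a b
end

section
/- Let μ be a finitely additive, monotone, finitely subadditive set function on subsets of a compact metrizable space X defined on closed sets via outer approximation by open sets. If F is closed and F = ⋃_{n=1}^∞ F_n for an increasing sequence of closed sets F_n, then μ(F) = sup_n μ(F_n). -/
/-!
Choose open `Wₖ ⊇ Fₖ` with `m Wₖ ≤ μ Fₖ + εₖ`. Their partial unions `W₀ ∪ ⋯ ∪ Wₙ` are increasing
open sets covering the compact set `F`, so one of them already contains `F`. Their measure
stays within `ε₀ + ⋯ + εₙ` of `μ Fₙ`: for closed `C` inside open `V` and `W`, a normal neighbourhood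
of `C` splits `V` into a part near `C`, worth at least `μ C`, and a part outside `W`, so
`m (V ∪ W) + μ C ≤ m V + m W`.
-/

open scoped Pointwise NNReal ENNReal

variable {X : Type*} [TopologicalSpace X] {G : Type*} [Group G] [MulAction G X]

section

noncomputable def outerByOpen (m : Set X → ℝ≥0∞) (C : Set X) : ℝ≥0∞ :=
  ⨅ (O : Set X) (_ : IsOpen O ∧ C ⊆ O), m O

variable (m : Set X → ℝ≥0∞)

theorem outerByOpen_le {C O : Set X} (hO : IsOpen O) (hCO : C ⊆ O) : outerByOpen m C ≤ m O :=
  iInf₂_le O ⟨hO, hCO⟩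

theorem outerByOpen_mono : Monotone (outerByOpen m) := fun _ _ h =>
  le_iInf₂ fun O hO => iInf₂_le O ⟨hO.1, h.trans hO.2⟩

theorem exists_isOpen_le_outerByOpen_add (C : Set X) {e : ℝ≥0∞} (he : e ≠ 0) :
    ∃ W, IsOpen W ∧ C ⊆ W ∧ m W ≤ outerByOpen m C + e := by
  rcases eq_or_ne (outerByOpen m C) ∞ with hC | hC
  · exact ⟨Set.univ, isOpen_univ, Set.subset_univ C, by simp [hC]⟩
  obtain ⟨W, ⟨hWo, hCW⟩, hW⟩ : ∃ W, (IsOpen W ∧ C ⊆ W) ∧ m W < outerByOpen m C + e := by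
    simpa only [outerByOpen, iInf_lt_iff, exists_prop] using ENNReal.lt_add_right hC he
  exact ⟨W, hWo, hCW, hW.le⟩

theorem isOpen_accumulate {W : ℕ → Set X} (hW : ∀ k, IsOpen (W k)) (n : ℕ) :
    IsOpen (Set.accumulate W n) :=
  isOpen_biUnion fun k _ => hW k

variable {m} [NormalSpace X]

theorem measure_union_add_outerByOpen_le
    (hmono : ∀ O₁ O₂ : Set X, IsOpen O₁ → IsOpen O₂ → O₁ ⊆ O₂ → m O₁ ≤ m O₂)
    (hsubadd : ∀ O₁ O₂ : Set X, IsOpen O₁ → IsOpen O₂ → m (O₁ ∪ O₂) ≤ m O₁ + m O₂)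
    (hadd : ∀ O₁ O₂ : Set X, IsOpen O₁ → IsOpen O₂ → Disjoint O₁ O₂ →
      m (O₁ ∪ O₂) = m O₁ + m O₂)
    {C V W : Set X} (hC : IsClosed C) (hV : IsOpen V)
    (hW : IsOpen W) (hCV : C ⊆ V) (hCW : C ⊆ W) :
    m (V ∪ W) + outerByOpen m C ≤ m V + m W := by
  obtain ⟨U, hUo, hCU, hUW⟩ := normal_exists_closure_subset hC hW hCW
  set V' := V \ closure U
  have hV'o : IsOpen V' := hV.sdiff isClosed_closure
  have hVU : IsOpen (V ∩ U) := hV.inter hUo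
  have hfar : m (V ∪ W) ≤ m V' + m W := by
    refine (hmono _ _ (hV.union hW) (hV'o.union hW) ?_).trans (hsubadd _ _ hV'o hW)
    rintro x (hx | hx)
    · by_cases hxU : x ∈ closure U
      exacts [Or.inr (hUW hxU), Or.inl ⟨hx, hxU⟩]
    · exact Or.inr hx
  have hnear : m V' + outerByOpen m C ≤ m V :=
    calc m V' + outerByOpen m C ≤ m V' + m (V ∩ U) :=
          by gcongr; exact outerByOpen_le m hVU (Set.subset_inter hCV hCU)
      _ = m (V' ∪ V ∩ U) :=
          (hadd _ _ hV'o hVU (Set.disjoint_sdiff_left.mono_right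
            (Set.inter_subset_right.trans subset_closure))).symm
      _ ≤ m V := hmono _ _ (hV'o.union hVU) hV
          (Set.union_subset Set.sdiff_subset Set.inter_subset_left)
  calc m (V ∪ W) + outerByOpen m C ≤ m V' + m W + outerByOpen m C := by gcongr
    _ = m V' + outerByOpen m C + m W := add_right_comm _ _ _
    _ ≤ m V + m W := by gcongr

theorem measure_accumulate_le
    (hmono : ∀ O₁ O₂ : Set X, IsOpen O₁ → IsOpen O₂ → O₁ ⊆ O₂ → m O₁ ≤ m O₂)
    (hsubadd : ∀ O₁ O₂ : Set X, IsOpen O₁ → IsOpen O₂ → m (O₁ ∪ O₂) ≤ m O₁ + m O₂)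
    (hadd : ∀ O₁ O₂ : Set X, IsOpen O₁ → IsOpen O₂ → Disjoint O₁ O₂ →
      m (O₁ ∪ O₂) = m O₁ + m O₂)
    {F W : ℕ → Set X} {e : ℕ → ℝ≥0∞} (hF : ∀ n, IsClosed (F n))
    (hFmono : Monotone F) (hfin : ∀ n, outerByOpen m (F n) ≠ ∞) (hWo : ∀ n, IsOpen (W n))
    (hFW : ∀ n, F n ⊆ W n) (hWe : ∀ n, m (W n) ≤ outerByOpen m (F n) + e n) (N : ℕ) :
    m (Set.accumulate W N) ≤ outerByOpen m (F N) + ∑ k ∈ Finset.range (N + 1), e k := by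
  induction N with
  | zero => simpa using hWe 0
  | succ N ih =>
    have hFacc : F N ⊆ Set.accumulate W N := (hFW N).trans Set.subset_accumulate
    have hstep := measure_union_add_outerByOpen_le hmono hsubadd hadd (hF N)
      (isOpen_accumulate hWo N) (hWo (N + 1)) hFacc ((hFmono N.le_succ).trans (hFW (N + 1)))
    refine ENNReal.le_of_add_le_add_right (hfin N) ?_
    calc m (Set.accumulate W (N + 1)) + outerByOpen m (F N)
        ≤ m (Set.accumulate W N) + m (W (N + 1)) := by rwa [Set.accumulate_succ]
      _ ≤ (outerByOpen m (F N) + ∑ k ∈ Finset.range (N + 1), e k) +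
          (outerByOpen m (F (N + 1)) + e (N + 1)) := add_le_add ih (hWe (N + 1))
      _ = (outerByOpen m (F (N + 1)) + ∑ k ∈ Finset.range (N + 2), e k) +
          outerByOpen m (F N) := by
        rw [Finset.sum_range_succ _ (N + 1)]; ring

end

/-- **Claim 1 in Lemma 3.6.** Let `m` be a `[0,∞]`-valued set function on the open sets of a
compact metrizable space which is monotone, finitely subadditive and additive on disjoint
open sets, and extend it to closed sets by outer approximation:
`μc F = inf { m O : F ⊆ O open }`. If `F` is closed and `F = ⋃ₙ Fₙ` for an increasing
sequence of closed sets `Fₙ`, then `μc F = supₙ μc Fₙ`. -/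
theorem closed_outer_continuity {X : Type*} [TopologicalSpace X] [CompactSpace X]
    [TopologicalSpace.MetrizableSpace X]
    (m : Set X → ℝ≥0∞)
    (hmono : ∀ O₁ O₂ : Set X, IsOpen O₁ → IsOpen O₂ → O₁ ⊆ O₂ → m O₁ ≤ m O₂)
    (hsubadd : ∀ O₁ O₂ : Set X, IsOpen O₁ → IsOpen O₂ → m (O₁ ∪ O₂) ≤ m O₁ + m O₂)
    (hadd : ∀ O₁ O₂ : Set X, IsOpen O₁ → IsOpen O₂ → Disjoint O₁ O₂ →
      m (O₁ ∪ O₂) = m O₁ + m O₂)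
    (μc : Set X → ℝ≥0∞)
    (hμc : ∀ F : Set X, μc F = ⨅ (O : Set X) (_ : IsOpen O ∧ F ⊆ O), m O)
    (F : Set X) (hF : IsClosed F) (Fn : ℕ → Set X) (hFn : ∀ n, IsClosed (Fn n))
    (hinc : Monotone Fn) (hU : F = ⋃ n, Fn n) :
    μc F = ⨆ n, μc (Fn n) := by
  obtain rfl : μc = outerByOpen m := funext hμc
  refine le_antisymm ?_ (iSup_le fun n => outerByOpen_mono m (hU ▸ Set.subset_iUnion Fn n))
  refine ENNReal.le_of_forall_pos_le_add fun ε hε hlt => ?_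
  have hfin : ∀ n, outerByOpen m (Fn n) ≠ ∞ := fun n => ((le_iSup _ n).trans_lt hlt).ne
  obtain ⟨e, he, hesum⟩ := ENNReal.exists_pos_sum_of_countable (ENNReal.coe_ne_zero.2 hε.ne') ℕ
  choose W hWo hFW hWe using fun k =>
    exists_isOpen_le_outerByOpen_add m (Fn k) (ENNReal.coe_ne_zero.2 (he k).ne')
  obtain ⟨N, hN⟩ : ∃ N, F ⊆ Set.accumulate W N := by
    refine hF.isCompact.elim_directed_cover _ (isOpen_accumulate hWo)
      ?_ Set.monotone_accumulate.directed_le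
    rw [Set.iUnion_accumulate, hU]
    exact Set.iUnion_mono hFW
  calc outerByOpen m F ≤ m (Set.accumulate W N) :=
        outerByOpen_le m (isOpen_accumulate hWo N) hN
    _ ≤ outerByOpen m (Fn N) + ∑ k ∈ Finset.range (N + 1), (e k : ℝ≥0∞) :=
        measure_accumulate_le hmono hsubadd hadd hFn hinc hfin hWo hFW hWe N
    _ ≤ (⨆ n, outerByOpen m (Fn n)) + ε :=
        add_le_add (le_iSup (fun n => outerByOpen m (Fn n)) N)
          ((ENNReal.sum_le_tsum _).trans hesum.le)
end

section
/- Every lower semi-continuous state D on W(X,G) induces a G-invariant regular premeasure μ_D on the algebra A_0 generated by open sets of X, defined on an open set O = supp(f) by μ_D(O) = D([f]); μ_D is countably additive on A_0, G-invariant, inner regular by closed sets and outer regular by open sets. -/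
open scoped Pointwise NNReal ENNReal

variable {X : Type*} [TopologicalSpace X] {G : Type*} [Group G] [MulAction G X]

/-!
For an open set `O` let `μ_D(O) = D([f])` for any `f` with open support `O`; since `D` is
monotone for `≼`, this depends only on `O`, and it is monotone, superadditive on disjoint open
sets and `G`-invariant. Lower semicontinuity makes it countably subadditive: `D([f])` is the
supremum of the `D([(f - ε)₊])`, and the compact set `{f ≥ ε}` is covered by finitely many
members of any open cover of the support of `f`. So `μ_D` generates an outer measure, outer
regular by construction, and superadditivity on disjoint open sets makes it a metric outer
measure, so all Borel sets are Carathéodory measurable. This gives countable additivity on the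
algebra, and inner regularity by closed sets holds because every set of the algebra is `F_σ`.
-/

open MeasureTheory Set

theorem isOpen_osupp (f : C(X, ℝ≥0)) : IsOpen (osupp f) :=
  isOpen_ne_fun f.continuous continuous_const

theorem setSubeq_singleton_of_subset_biUnion {S : Set X} {L : List (Set X)}
    (hL : ∀ s ∈ L, IsOpen s) (h : S ⊆ ⋃ s ∈ L, s) : SetSubeq G [S] L := by
  intro F hF
  refine ⟨fun _ => L.length, fun _ => L.get, fun _ _ => 1, fun _ => id,
    fun _ j => hL _ (L.get_mem j), fun i => ?_, fun _ _ => (one_smul G _).subset, ?_⟩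
  · obtain rfl : i = 0 := Subsingleton.elim (α := Fin 1) _ _
    refine (hF 0).2.trans (h.trans (iUnion₂_subset fun s hs => ?_))
    obtain ⟨j, rfl⟩ := List.mem_iff_get.1 hs
    exact subset_iUnion L.get j
  · rintro ⟨i, j⟩ ⟨i', j'⟩ hne (rfl : j = j')
    obtain rfl : i = i' := Subsingleton.elim (α := Fin 1) _ _
    exact absurd rfl hne

theorem setSubeq_pair_singleton_of_disjoint {S₁ S₂ T : Set X} (h₁ : IsOpen S₁)
    (h₂ : IsOpen S₂) (hd : Disjoint S₁ S₂) (hs₁ : S₁ ⊆ T) (hs₂ : S₂ ⊆ T) :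
    SetSubeq G [S₁, S₂] [T] := by
  intro F hF
  refine ⟨fun _ => 1, fun i _ => [S₁, S₂].get i, fun _ _ => 1, fun _ _ => 0,
    fun i _ => ?_, fun i => (hF i).2.trans (subset_iUnion_of_subset 0 le_rfl), fun i _ => ?_, ?_⟩
  · fin_cases i
    exacts [h₁, h₂]
  · rw [one_smul]
    fin_cases i
    exacts [hs₁, hs₂]
  · rintro ⟨i, j⟩ ⟨i', j'⟩ hne -
    obtain rfl : j = j' := Subsingleton.elim (α := Fin 1) _ _
    have hii : i ≠ i' := fun h => hne (h ▸ rfl)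
    simp only [one_smul]
    fin_cases i <;> fin_cases i' <;> first | exact absurd rfl hii | exact hd | exact hd.symm

theorem setSubeq_singleton_of_smul_subset {S T : Set X} (hS : IsOpen S) (g : G)
    (h : g • S ⊆ T) : SetSubeq G [S] [T] := by
  intro F hF
  refine ⟨fun _ => 1, fun _ _ => S, fun _ _ => g, fun _ _ => 0, fun _ _ => hS,
    fun i => (hF i).2.trans (subset_iUnion_of_subset 0 ?_), fun _ _ => h, ?_⟩
  · obtain rfl : i = 0 := Subsingleton.elim (α := Fin 1) _ _
    exact le_rfl
  · rintro ⟨i, j⟩ ⟨i', j'⟩ hne -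
    obtain rfl : i = i' := Subsingleton.elim (α := Fin 1) _ _
    obtain rfl : j = j' := Subsingleton.elim (α := Fin 1) _ _
    exact absurd rfl hne

namespace DynState

variable (D : DynState X G)

theorem apply_eq_sum (l : List C(X, ℝ≥0)) : D.toFun l = (l.map fun f => D.toFun [f]).sum := by
  induction l with
  | nil => exact D.zero'
  | cons f l ih => rw [List.map_cons, List.sum_cons, ← ih, ← D.additive, List.singleton_append]

theorem apply_singleton_le_of_subset_biUnion {f : C(X, ℝ≥0)} {l : List C(X, ℝ≥0)}
    (h : osupp f ⊆ ⋃ g ∈ l, osupp g) : D.toFun [f] ≤ D.toFun l := by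
  refine D.mono _ _ (setSubeq_singleton_of_subset_biUnion ?_ ?_)
  · simp only [List.mem_map]
    rintro _ ⟨g, -, rfl⟩
    exact isOpen_osupp g
  · simpa only [List.mem_map, iUnion_exists, biUnion_and', iUnion_iUnion_eq_right] using h

theorem apply_singleton_eq_zero {f : C(X, ℝ≥0)} (h : osupp f = ∅) : D.toFun [f] = 0 :=
  nonpos_iff_eq_zero.1 <| D.zero' ▸ D.apply_singleton_le_of_subset_biUnion (by simp [h])

theorem apply_singleton_mono {f g : C(X, ℝ≥0)} (h : osupp f ⊆ osupp g) :
    D.toFun [f] ≤ D.toFun [g] :=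
  D.apply_singleton_le_of_subset_biUnion (by simpa using h)

theorem apply_singleton_congr {f g : C(X, ℝ≥0)} (h : osupp f = osupp g) :
    D.toFun [f] = D.toFun [g] :=
  (D.apply_singleton_mono h.le).antisymm (D.apply_singleton_mono h.ge)

theorem add_le_of_disjoint {f₁ f₂ g : C(X, ℝ≥0)} (hd : Disjoint (osupp f₁) (osupp f₂))
    (h₁ : osupp f₁ ⊆ osupp g) (h₂ : osupp f₂ ⊆ osupp g) :
    D.toFun [f₁] + D.toFun [f₂] ≤ D.toFun [g] :=
  D.additive [f₁] [f₂] ▸ D.mono _ _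
    (setSubeq_pair_singleton_of_disjoint (isOpen_osupp _) (isOpen_osupp _) hd h₁ h₂)

theorem apply_singleton_le_of_smul_subset {f g : C(X, ℝ≥0)} (a : G)
    (h : a • osupp f ⊆ osupp g) : D.toFun [f] ≤ D.toFun [g] :=
  D.mono _ _ (setSubeq_singleton_of_smul_subset (isOpen_osupp _) a h)

theorem apply_singleton_le_tsum [CompactSpace X] (hD : D.LSC) {f : C(X, ℝ≥0)}
    {g : ℕ → C(X, ℝ≥0)} (h : osupp f ⊆ ⋃ n, osupp (g n)) :
    D.toFun [f] ≤ ∑' n, D.toFun [g n] := by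
  rw [hD [f]]
  refine iSup₂_le fun ε hε => ?_
  have hK : IsCompact {x | ε ≤ f x} := (isClosed_le continuous_const f.continuous).isCompact
  have hKf : {x | ε ≤ f x} ⊆ osupp f := fun x hx => (hε.trans_le hx).ne'
  have hcut : osupp (cutFun f ε) ⊆ {x | ε ≤ f x} := fun x hx =>
    (tsub_pos_iff_lt.1 (pos_iff_ne_zero.2 hx)).le
  obtain ⟨t, ht⟩ := hK.elim_finite_subcover _ (fun n => isOpen_osupp (g n)) (hKf.trans h)
  calc D.toFun (cutList [f] ε) = D.toFun [cutFun f ε] := rfl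
    _ ≤ D.toFun (t.toList.map g) := D.apply_singleton_le_of_subset_biUnion <| by
        simpa only [List.mem_map, Finset.mem_toList, iUnion_exists, biUnion_and',
          iUnion_iUnion_eq_right] using hcut.trans ht
    _ = ∑ n ∈ t, D.toFun [g n] := by rw [apply_eq_sum, List.map_map, Finset.sum_map_toList]; rfl
    _ ≤ ∑' n, D.toFun [g n] := ENNReal.sum_le_tsum t

end DynState

section EMetric

variable {X : Type*} [PseudoEMetricSpace X]

theorem Metric.AreSeparated.separatedNhds {s t : Set X} (h : Metric.AreSeparated s t) :
    SeparatedNhds s t := by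
  obtain ⟨r, hr, hst⟩ := h
  refine ⟨⋃ x ∈ s, Metric.eball x (r / 2), ⋃ y ∈ t, Metric.eball y (r / 2),
    isOpen_biUnion fun _ _ => Metric.isOpen_eball, isOpen_biUnion fun _ _ => Metric.isOpen_eball,
    fun x hx => mem_biUnion hx (Metric.mem_eball_self (ENNReal.half_pos hr)),
    fun y hy => mem_biUnion hy (Metric.mem_eball_self (ENNReal.half_pos hr)), ?_⟩
  simp only [Set.disjoint_left, mem_iUnion₂]
  rintro z ⟨x, hx, hzx⟩ ⟨y, hy, hzy⟩
  refine (hst x hx y hy).not_gt ?_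
  calc edist x y ≤ edist z x + edist z y := edist_triangle_left x y z
    _ < r / 2 + r / 2 := ENNReal.add_lt_add hzx hzy
    _ = r := ENNReal.add_halves r

noncomputable def supportFun (O : Set X) : C(X, ℝ≥0) :=
  ⟨fun x => (min 1 (Metric.infEDist x Oᶜ)).toNNReal,
    ENNReal.continuousOn_toNNReal.comp_continuous
      (continuous_const.min Metric.continuous_infEDist)
      fun _ => ((min_le_left _ _).trans_lt ENNReal.one_lt_top).ne⟩

theorem osupp_supportFun {O : Set X} (hO : IsOpen O) : osupp (supportFun O) = O := by
  ext x
  have hfin : min 1 (Metric.infEDist x Oᶜ) ≠ ⊤ :=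
    ((min_le_left _ _).trans_lt ENNReal.one_lt_top).ne
  simp only [osupp, supportFun, ContinuousMap.coe_mk, mem_ofPred_eq, ne_eq,
    ENNReal.toNNReal_eq_zero_iff, hfin, or_false, min_eq_zero, one_ne_zero, false_or]
  rw [← Metric.mem_closure_iff_infEDist_zero, hO.isClosed_compl.closure_eq, notMem_compl_iff]

end EMetric

section OuterMeasure

variable {X : Type*} [EMetricSpace X] {G : Type*} [Group G] [MulAction G X]

namespace DynState

variable (D : DynState X G)

/-- `μ_D` on open sets. -/
noncomputable def openMass (O : Set X) : ℝ≥0∞ := D.toFun [supportFun O]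

theorem openMass_osupp (f : C(X, ℝ≥0)) : D.openMass (osupp f) = D.toFun [f] :=
  D.apply_singleton_congr (osupp_supportFun (isOpen_osupp f))

theorem openMass_empty : D.openMass ∅ = 0 :=
  D.apply_singleton_eq_zero (osupp_supportFun isOpen_empty)

theorem openMass_mono {O O' : Set X} (hO : IsOpen O) (hO' : IsOpen O') (h : O ⊆ O') :
    D.openMass O ≤ D.openMass O' :=
  D.apply_singleton_mono (by rwa [osupp_supportFun hO, osupp_supportFun hO'])

theorem add_openMass_le_of_disjoint {O₁ O₂ O : Set X} (h₁ : IsOpen O₁) (h₂ : IsOpen O₂)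
    (hO : IsOpen O) (hd : Disjoint O₁ O₂) (hs₁ : O₁ ⊆ O) (hs₂ : O₂ ⊆ O) :
    D.openMass O₁ + D.openMass O₂ ≤ D.openMass O :=
  D.add_le_of_disjoint (by rwa [osupp_supportFun h₁, osupp_supportFun h₂])
    (by rwa [osupp_supportFun h₁, osupp_supportFun hO])
    (by rwa [osupp_supportFun h₂, osupp_supportFun hO])

theorem openMass_smul [ContinuousConstSMul G X] (a : G) {O : Set X} (hO : IsOpen O) :
    D.openMass (a • O) = D.openMass O := by
  have hO' := osupp_supportFun (hO.smul a)
  refine le_antisymm (D.apply_singleton_le_of_smul_subset a⁻¹ ?_)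
    (D.apply_singleton_le_of_smul_subset a ?_)
  · rw [hO', osupp_supportFun hO, inv_smul_smul]
  · rw [hO', osupp_supportFun hO]

theorem openMass_iUnion_le [CompactSpace X] (hD : D.LSC) {O : ℕ → Set X}
    (hO : ∀ n, IsOpen (O n)) : D.openMass (⋃ n, O n) ≤ ∑' n, D.openMass (O n) :=
  D.apply_singleton_le_tsum hD <| by
    simp only [osupp_supportFun (isOpen_iUnion hO), osupp_supportFun (hO _), subset_rfl]

noncomputable def outerMeasure : OuterMeasure X :=
  inducedOuterMeasure (fun O (_ : IsOpen O) => D.openMass O) isOpen_empty D.openMass_empty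

variable [CompactSpace X] {D} (hD : D.LSC)
include hD

theorem outerMeasure_of_isOpen {O : Set X} (hO : IsOpen O) : D.outerMeasure O = D.openMass O :=
  inducedOuterMeasure_eq' (fun _ => isOpen_iUnion) (fun _ => D.openMass_iUnion_le hD)
    (fun _ _ => D.openMass_mono) hO

theorem outerMeasure_eq_iInf_openMass (s : Set X) :
    D.outerMeasure s = ⨅ (O : Set X) (_ : IsOpen O) (_ : s ⊆ O), D.openMass O :=
  inducedOuterMeasure_eq_iInf (fun _ => isOpen_iUnion) (fun _ => D.openMass_iUnion_le hD)
    (fun _ _ => D.openMass_mono) s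

theorem outerMeasure_eq_iInf (s : Set X) :
    D.outerMeasure s = ⨅ (O : Set X) (_ : IsOpen O ∧ s ⊆ O), D.outerMeasure O := by
  simp only [D.outerMeasure_eq_iInf_openMass hD s, iInf_and]
  refine iInf_congr fun O => iInf_congr fun hO => iInf_congr fun _ => ?_
  rw [outerMeasure_of_isOpen hD hO]

theorem outerMeasure_osupp (f : C(X, ℝ≥0)) : D.outerMeasure (osupp f) = D.toFun [f] := by
  rw [outerMeasure_of_isOpen hD (isOpen_osupp f), openMass_osupp]

theorem outerMeasure_le_openMass {s O : Set X} (hO : IsOpen O) (h : s ⊆ O) :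
    D.outerMeasure s ≤ D.openMass O :=
  (measure_mono h).trans (outerMeasure_of_isOpen hD hO).le

theorem outerMeasure_isMetric : D.outerMeasure.IsMetric := by
  intro s t hst
  obtain ⟨U, V, hU, hV, hsU, htV, hUV⟩ := hst.separatedNhds
  refine le_antisymm (measure_union_le s t) ?_
  rw [outerMeasure_eq_iInf_openMass hD (s ∪ t)]
  refine le_iInf₂ fun O hO => le_iInf fun hstO => ?_
  calc D.outerMeasure s + D.outerMeasure t ≤ D.openMass (O ∩ U) + D.openMass (O ∩ V) :=
        add_le_add
          (outerMeasure_le_openMass hD (hO.inter hU)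
            (subset_inter (subset_union_left.trans hstO) hsU))
          (outerMeasure_le_openMass hD (hO.inter hV)
            (subset_inter (subset_union_right.trans hstO) htV))
    _ ≤ D.openMass O := D.add_openMass_le_of_disjoint (hO.inter hU) (hO.inter hV) hO
        (hUV.mono inter_subset_right inter_subset_right) inter_subset_left inter_subset_left

theorem outerMeasure_smul [ContinuousConstSMul G X] (a : G) (s : Set X) :
    D.outerMeasure (a • s) = D.outerMeasure s := by
  have smul_le : ∀ (b : G) (t : Set X), D.outerMeasure (b • t) ≤ D.outerMeasure t := by
    intro b t
    rw [outerMeasure_eq_iInf_openMass hD t]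
    refine le_iInf₂ fun O hO => le_iInf fun ht => ?_
    exact (outerMeasure_le_openMass hD (hO.smul b) (smul_set_mono ht)).trans_eq
      (D.openMass_smul b hO)
  refine (smul_le a s).antisymm ?_
  simpa only [inv_smul_smul] using smul_le a⁻¹ (a • s)

end DynState

end OuterMeasure

namespace InAlg

theorem of_isOpen {s : Set X} (hs : IsOpen s) : InAlg X s :=
  generateSetAlgebra.base s hs

theorem of_isClosed {s : Set X} (hs : IsClosed s) : InAlg X s :=
  compl_compl s ▸ generateSetAlgebra.compl _ (of_isOpen hs.isOpen_compl)

theorem measurableSet {s : Set X} (h : InAlg X s) : MeasurableSet[borel X] s := by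
  induction h with
  | base t ht => exact MeasurableSpace.measurableSet_generateFrom ht
  | empty => exact @MeasurableSet.empty _ (borel X)
  | compl t _ ih => exact ih.compl
  | union t u _ _ iht ihu => exact iht.union ihu

theorem smul [ContinuousConstSMul G X] (a : G) {s : Set X} (h : InAlg X s) :
    InAlg X (a • s) := by
  induction h with
  | base t ht => exact of_isOpen (ht.smul a)
  | empty => rw [smul_set_empty]; exact generateSetAlgebra.empty
  | compl t _ ih => rw [smul_set_compl]; exact generateSetAlgebra.compl _ ih
  | union t u _ _ iht ihu => rw [smul_set_union]; exact generateSetAlgebra.union _ _ iht ihu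

theorem isGδ_compl [PerfectlyNormalSpace X] {s : Set X} (h : InAlg X s) : IsGδ sᶜ := by
  suffices IsGδ s ∧ IsGδ sᶜ from this.2
  induction h with
  | base t ht => exact ⟨ht.isGδ, ht.isClosed_compl.isGδ⟩
  | empty => exact ⟨isOpen_empty.isGδ, compl_empty ▸ isOpen_univ.isGδ⟩
  | compl t _ ih => exact ⟨ih.2, (compl_compl t).symm ▸ ih.1⟩
  | union t u _ _ iht ihu => exact ⟨iht.1.union ihu.1, compl_union t u ▸ iht.2.inter ihu.2⟩

end InAlg

theorem MeasureTheory.OuterMeasure.eq_iSup_isClosed_of_isGδ_compl (μ : OuterMeasure X)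
    (hμ : borel X ≤ μ.caratheodory) {s : Set X} (hs : IsGδ sᶜ) :
    μ s = ⨆ (F : Set X) (_ : IsClosed F ∧ F ⊆ s), μ F := by
  refine le_antisymm ?_ (iSup₂_le fun F hF => measure_mono hF.2)
  borelize X
  obtain ⟨U, hU, hsU⟩ := hs.eq_iInter_nat
  have hs : s = ⋃ n, (U n)ᶜ := by rw [← compl_iInter, ← hsU, compl_compl]
  have hclosed (n : ℕ) : IsClosed (accumulate (fun n => (U n)ᶜ) n) :=
    (finite_Iic n).isClosed_biUnion fun i _ => (hU i).isClosed_compl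
  have hsub (n : ℕ) : accumulate (fun n => (U n)ᶜ) n ⊆ s := hs ▸ accumulate_subset_iUnion n
  calc μ s ≤ μ.toMeasure hμ s := le_toMeasure_apply μ hμ s
    _ = ⨆ n, μ (accumulate (fun n => (U n)ᶜ) n) := by
        conv_lhs => rw [hs]
        rw [measure_iUnion_eq_iSup_accumulate]
        simp only [toMeasure_apply μ hμ (hclosed _).measurableSet]
    _ ≤ ⨆ (F : Set X) (_ : IsClosed F ∧ F ⊆ s), μ F :=
        iSup_le fun n => le_iSup₂_of_le _ ⟨hclosed n, hsub n⟩ le_rfl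

open Classical in
noncomputable def InvRegPremeasure.ofOuterMeasure [CompactSpace X] [T2Space X]
    [PerfectlyNormalSpace X] [ContinuousConstSMul G X] (μ : OuterMeasure X)
    (hμ : borel X ≤ μ.caratheodory) (hinv : ∀ (a : G) (s : Set X), μ (a • s) = μ s)
    (hreg : ∀ s : Set X, μ s = ⨅ (O : Set X) (_ : IsOpen O ∧ s ⊆ O), μ O) :
    InvRegPremeasure X G where
  m s := if InAlg X s then μ s else 0
  junk _ hs := if_neg hs
  empty' := by simp only [measure_empty, ite_self]
  countably_additive A hA hd hU := by
    simp only [if_pos hU, if_pos (hA _)]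
    exact μ.iUnion_eq_of_caratheodory (fun n => hμ _ (hA n).measurableSet) hd
  invariant a s hs := by simp only [if_pos hs, if_pos (hs.smul a), hinv]
  inner_regular s hs := by
    rw [if_pos hs, μ.eq_iSup_isClosed_of_isGδ_compl hμ hs.isGδ_compl]
    refine iSup_congr fun F => iSup_congr_Prop ?_ fun hF => ?_
    · exact and_congr_left' ⟨IsClosed.isCompact, IsCompact.isClosed⟩
    · rw [if_pos (InAlg.of_isClosed hF.1.isClosed)]
  outer_regular s hs := by
    rw [if_pos hs, hreg s]
    exact iInf_congr fun O => iInf_congr fun hO => by rw [if_pos (InAlg.of_isOpen hO.1)]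

theorem InvRegPremeasure.ofOuterMeasure_m_of_inAlg [CompactSpace X] [T2Space X]
    [PerfectlyNormalSpace X] [ContinuousConstSMul G X] {μ : OuterMeasure X}
    (hμ : borel X ≤ μ.caratheodory) (hinv : ∀ (a : G) (s : Set X), μ (a • s) = μ s)
    (hreg : ∀ s : Set X, μ s = ⨅ (O : Set X) (_ : IsOpen O ∧ s ⊆ O), μ O) {s : Set X}
    (hs : InAlg X s) : (ofOuterMeasure μ hμ hinv hreg).m s = μ s :=
  if_pos hs

theorem premeasure_of_lscState_general {X : Type*} [TopologicalSpace X] [CompactSpace X]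
    [TopologicalSpace.MetrizableSpace X]
    {G : Type*} [Group G] [MulAction G X]
    (hG : ∀ g : G, Continuous fun x : X => g • x)
    (D : DynState X G) (hD : D.LSC) :
    ∃ μ : InvRegPremeasure X G, ∀ f : C(X, ℝ≥0), μ.m (osupp f) = D.toFun [f] := by
  let : MetricSpace X := TopologicalSpace.metrizableSpaceMetric X
  have : ContinuousConstSMul G X := ⟨hG⟩
  have hμ := (D.outerMeasure_isMetric hD).borel_le_caratheodory
  refine ⟨.ofOuterMeasure D.outerMeasure hμ (D.outerMeasure_smul hD)
    (D.outerMeasure_eq_iInf hD), fun f => ?_⟩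
  rw [InvRegPremeasure.ofOuterMeasure_m_of_inAlg _ _ _ (.of_isOpen (isOpen_osupp f)),
    DynState.outerMeasure_osupp hD]

/-- **Lemma 3.6.** Every lower semi-continuous state `D` on `W(X, G)` induces a
`G`-invariant regular premeasure `μ_D` on the algebra generated by the open sets of `X`,
with `μ_D(supp f) = D([f])` for every `f ∈ C(X)₊`.  (The structure `InvRegPremeasure`
records countable additivity on the algebra, `G`-invariance, inner regularity by
compact (= closed) sets and outer regularity by open sets.) -/
theorem premeasure_of_lscState {X : Type*} [TopologicalSpace X] [CompactSpace X]
    [T2Space X] [TopologicalSpace.MetrizableSpace X]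
    {G : Type*} [Group G] [MulAction G X]
    (hG : ∀ g : G, Continuous fun x : X => g • x)
    (D : DynState X G) (hD : D.LSC) :
    ∃ μ : InvRegPremeasure X G, ∀ f : C(X, ℝ≥0), μ.m (osupp f) = D.toFun [f] :=
  premeasure_of_lscState_general hG D hD
end

section
/- Let X be a compact metrizable space and μ a set function defined on F_σ subsets of X by inner approximation by closed sets, induced from a monotone, finitely subadditive and finitely additive (on disjoint sets) function on open and closed sets. If A = ⋃_{n=1}^∞ F_n for an increasing sequence of closed sets F_n, then μ(A) = sup_n μ(F_n). -/
open scoped Pointwise NNReal ENNReal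

variable {X : Type*} [TopologicalSpace X] {G : Type*} [Group G] [MulAction G X]

/-- **Claim 2 in Lemma 3.6.** Let `m` be a `[0,∞]`-valued set function on the open sets of a
compact metrizable space which is monotone, finitely subadditive, additive on disjoint open
sets, and inner regular by closed sets; let `μc` be its extension to closed sets by outer
approximation and `μσ` the extension to `F_σ` sets by inner approximation by closed sets.
Assume moreover the closed-set monotone continuity of Claim 1. If `A = ⋃ₙ Fₙ` for an
increasing sequence of closed sets `Fₙ`, then `μσ A = supₙ μc Fₙ`. -/
theorem fsigma_inner_continuity {X : Type*} [TopologicalSpace X] [CompactSpace X]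
    [TopologicalSpace.MetrizableSpace X]
    (m : Set X → ℝ≥0∞)
    (hmono : ∀ O₁ O₂ : Set X, IsOpen O₁ → IsOpen O₂ → O₁ ⊆ O₂ → m O₁ ≤ m O₂)
    (hsubadd : ∀ O₁ O₂ : Set X, IsOpen O₁ → IsOpen O₂ → m (O₁ ∪ O₂) ≤ m O₁ + m O₂)
    (hadd : ∀ O₁ O₂ : Set X, IsOpen O₁ → IsOpen O₂ → Disjoint O₁ O₂ →
      m (O₁ ∪ O₂) = m O₁ + m O₂)
    (μc : Set X → ℝ≥0∞)
    (hμc : ∀ F : Set X, μc F = ⨅ (O : Set X) (_ : IsOpen O ∧ F ⊆ O), m O)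
    (hinner : ∀ O : Set X, IsOpen O →
      m O = ⨆ (F : Set X) (_ : IsClosed F ∧ F ⊆ O), μc F)
    (hclosed_cont : ∀ (F : Set X) (Fn : ℕ → Set X), IsClosed F → (∀ n, IsClosed (Fn n)) →
      Monotone Fn → F = ⋃ n, Fn n → μc F = ⨆ n, μc (Fn n))
    (μσ : Set X → ℝ≥0∞)
    (hμσ : ∀ A : Set X, μσ A = ⨆ (K : Set X) (_ : IsClosed K ∧ K ⊆ A), μc K)
    (A : Set X) (Fn : ℕ → Set X) (hFn : ∀ n, IsClosed (Fn n))
    (hinc : Monotone Fn) (hU : A = ⋃ n, Fn n) :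
    μσ A = ⨆ n, μc (Fn n) := by
  have hμc_mono : ∀ F₁ F₂ : Set X, F₁ ⊆ F₂ → μc F₁ ≤ μc F₂ := by
    intro F₁ F₂ h
    rw [hμc F₁, hμc F₂]
    exact le_iInf₂ fun O hO => iInf₂_le O ⟨hO.1, h.trans hO.2⟩
  rw [hμσ A]
  apply le_antisymm
  · apply iSup₂_le
    intro K hK
    have hKNFn : K = ⋃ n, K ∩ Fn n := by
      rw [← Set.inter_iUnion, ← hU]
      exact (Set.inter_eq_left.mpr hK.2).symm
    have := hclosed_cont K (fun n => K ∩ Fn n) hK.1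
      (fun n => hK.1.inter (hFn n))
      (fun a b hab => Set.inter_subset_inter_right _ (hinc hab)) hKNFn
    rw [this]
    exact iSup_mono fun n => hμc_mono _ _ Set.inter_subset_right
  · apply iSup_le
    intro n
    exact le_iSup₂ (f := fun K (_ : IsClosed K ∧ K ⊆ A) => μc K) (Fn n)
      ⟨hFn n, hU ▸ Set.subset_iUnion Fn n⟩
end
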